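/- Let m1, m2 be positive integers, let A be an m2×m2 real matrix and let B, C be m2×m1 real matrices satisfying: (i) Bᵀ B = Cᵀ C; (ii) A Aᵀ = Aᵀ A = I_{m2} − 2 B Bᵀ; (iii) the symmetric block matrix S = [[0, A, B], [Aᵀ, 0, C], [Bᵀ, Cᵀ, 0]] of size 2·m2 + m1 satisfies S³ = S. Then, with r = rank B (so r ≤ min(m1, m2)), there exist orthogonal matrices P, Q ∈ O(m2) and R ∈ O(m1), a diagonal r×r matrix σ with strictly positive diagonal entries, and an r×r skew-symmetric real matrix Δ with Δᵀ Δ = I_r − 2 σ² and Δ σ = σ Δ, such that Pᵀ B R = Qᵀ C R is the block matrix with all entries zero except the bottom-right r×r block which equals σ (rows split as m2 = (m2 − r) + r, columns as m1 = (m1 − r) + r), and Pᵀ A Q is the block-diagonal matrix [[I_{m2−r}, 0], [0, Δ]]. -/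

import Mathlib

/-!
Diagonalise the Gram matrix `Bᵀ B = Cᵀ C` by an orthogonal `R`; its nonzero eigenvalues are the
squares of the singular values `σ`, and completing the normalised nonzero columns of `B R` and of
`C R` to orthonormal bases gives `P` and `Q` with `Pᵀ B R = Qᵀ C R = [[0, 0], [0, σ]]`.
The blocks of `S³ = S` give `A C Cᵀ = B Bᵀ A` and `B Cᵀ Aᵀ + A C Bᵀ = 0`, and these relations
survive the change of bases. For `A' = Pᵀ A Q` they say that `A'` commutes with, and
anticommutes up to transposition with, `[[0, 0], [0, σ²]]`. Since `σ²` is invertible, `A'` is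
block diagonal `[[W, 0], [0, Δ]]` with `Δ` skew and commuting with `σ`, and `A' A'ᵀ = I − 2 σ²`
makes `W` orthogonal, so `W` can be absorbed into `Q`.
-/

open Matrix

theorem Equiv.exists_sum_fin_of_card {α : Type*} [Fintype α] (p : α → Prop) [DecidablePred p]
    {k r : ℕ} (hk : Fintype.card {x // ¬ p x} = k) (hr : Fintype.card {x // p x} = r) :
    ∃ e : Fin k ⊕ Fin r ≃ α, (∀ i, ¬ p (e (Sum.inl i))) ∧ ∀ j, p (e (Sum.inr j)) :=
  ⟨(Equiv.sumCongr (Fintype.equivFinOfCardEq hk).symm (Fintype.equivFinOfCardEq hr).symm).trans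
    ((Equiv.sumComm _ _).trans (Equiv.sumCompl p)),
    fun i => ((Fintype.equivFinOfCardEq hk).symm i).2,
    fun j => ((Fintype.equivFinOfCardEq hr).symm j).2⟩

namespace Matrix

variable {α k l m n p : Type*}

theorem fromBlocks_zero_pow_three_eq_self [Ring α] [Fintype m] [Fintype n] [DecidableEq m]
    [DecidableEq n] {E : Matrix m n α} {E' : Matrix n m α} {F : Matrix n n α}
    (h : fromBlocks 0 E E' F ^ 3 = fromBlocks 0 E E' F) :
    E * F * E' = 0 ∧ E * E' * E + E * F * F = E := by
  rw [pow_succ, sq, fromBlocks_multiply, fromBlocks_multiply, fromBlocks_inj] at h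
  simp only [Matrix.mul_zero, Matrix.zero_mul, zero_add, Matrix.mul_assoc] at h
  exact ⟨by simpa [Matrix.mul_assoc] using h.1, by simpa [Matrix.mul_assoc] using h.2.1⟩

section Conjugation

variable [CommSemiring α] [Fintype m] [Fintype n]

theorem transpose_conj (P : Matrix m k α) (X : Matrix m n α) (Q : Matrix n l α) :
    (Pᵀ * X * Q)ᵀ = Qᵀ * Xᵀ * P := by
  simp [Matrix.transpose_mul, Matrix.mul_assoc]

theorem conj_mul_conj_of_mul_transpose_eq_one [Fintype k] [Fintype p] [DecidableEq n]
    {m' p' : Type*} {Q : Matrix n k α} (hQ : Q * Qᵀ = 1) (P : Matrix m m' α) (X : Matrix m n α)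
    (Y : Matrix n p α) (R : Matrix p p' α) :
    Pᵀ * X * Q * (Qᵀ * Y * R) = Pᵀ * (X * Y) * R := by
  simp only [Matrix.mul_assoc]
  rw [← Matrix.mul_assoc Q, hQ, Matrix.one_mul]

theorem submatrix_transpose_mul_mul_submatrix {k' l' : Type*} (P : Matrix m k α)
    (X : Matrix m n α) (R : Matrix n l α) (e : k' → k) (f : l' → l) :
    (P.submatrix id e)ᵀ * X * R.submatrix id f = (Pᵀ * X * R).submatrix e f := by
  ext i j
  simp [Matrix.mul_apply]

theorem transpose_mul_self_submatrix_eq_one [DecidableEq k] [DecidableEq m] {k' : Type*}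
    [DecidableEq k'] {P : Matrix m k α} (hP : Pᵀ * P = 1) (e : k' ≃ k) :
    (P.submatrix id e)ᵀ * P.submatrix id e = 1 := by
  simpa [hP] using submatrix_transpose_mul_mul_submatrix P 1 P e e

end Conjugation

theorem exists_eq_fromBlocks_of_commute [CommRing α] [Fintype k] [Fintype l] [DecidableEq l]
    {X : Matrix (k ⊕ l) (k ⊕ l) α} {D : Matrix l l α} (hD : IsUnit D.det)
    (h : Commute X (fromBlocks 0 0 0 D)) :
    ∃ W Z, X = fromBlocks W 0 0 Z ∧ Commute Z D := by
  rw [← fromBlocks_toBlocks X, Commute, SemiconjBy, fromBlocks_multiply, fromBlocks_multiply,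
    fromBlocks_inj] at h
  simp only [Matrix.mul_zero, Matrix.zero_mul, add_zero, zero_add] at h
  obtain ⟨-, h₁₂, h₂₁, h₂₂⟩ := h
  have hX₁₂ : X.toBlocks₁₂ = 0 := by
    rw [← mul_nonsing_inv_cancel_right D X.toBlocks₁₂ hD, h₁₂, Matrix.zero_mul]
  have hX₂₁ : X.toBlocks₂₁ = 0 := by
    rw [← nonsing_inv_mul_cancel_left D X.toBlocks₂₁ hD, ← h₂₁, Matrix.mul_zero]
  exact ⟨_, _, (fromBlocks_toBlocks X).symm.trans (by rw [hX₁₂, hX₂₁]), h₂₂⟩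

section Real

variable [Fintype k] [Fintype l] [Fintype m] [DecidableEq k] [DecidableEq l]

theorem commute_diagonal_of_commute_diagonal_mul_self {Z : Matrix l l ℝ} {σ : l → ℝ}
    (hσ : ∀ i, 0 ≤ σ i) (h : Commute Z (diagonal σ * diagonal σ)) : Commute Z (diagonal σ) := by
  rw [diagonal_mul_diagonal] at h
  rw [Commute, SemiconjBy] at h ⊢
  ext i j
  have hij := congr_fun₂ h i j
  simp only [mul_diagonal, diagonal_mul] at hij ⊢
  rcases eq_or_ne (Z i j) 0 with hZ | hZ
  · simp [hZ]
  · have : σ j * σ j = σ i * σ i := mul_left_cancel₀ hZ (hij.trans (mul_comm _ _))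
    rw [(mul_self_inj (hσ j) (hσ i)).mp this, mul_comm]

theorem exists_fromCols_transpose_mul_self_eq_one {U : Matrix m l ℝ} (hU : Uᵀ * U = 1)
    (hcard : Fintype.card m = Fintype.card k + Fintype.card l) :
    ∃ V : Matrix m k ℝ, (fromCols V U)ᵀ * fromCols V U = 1 := by
  let u : l → EuclideanSpace ℝ m := fun j => WithLp.toLp 2 fun i => U i j
  have hu : Orthonormal ℝ u := by
    rw [← gram_eq_one_iff_orthonormal, gram_eq_conjTranspose_mul (EuclideanSpace.basisFun m ℝ)]
    simp only [u, conjTranspose_eq_transpose_of_trivial]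
    exact hU
  let e := Equiv.ofInjective (Sum.inr : l → k ⊕ l) Sum.inr_injective
  have hv : Orthonormal ℝ
      ((Set.range Sum.inr).domRestrict (Sum.elim (fun _ => 0) u : k ⊕ l → _)) := by
    convert hu.comp e.symm e.symm.injective using 1
    ext ⟨_, j, rfl⟩ : 1
    simp [e]
  obtain ⟨b, hb⟩ := hv.exists_orthonormalBasis_extension_of_card_eq (by simp [hcard])
  set M := (EuclideanSpace.basisFun m ℝ).toBasis.toMatrix b
  have hM : fromCols M.toCols₁ U = M := by
    ext i (j | j)
    · rfl
    · simp [M, Module.Basis.toMatrix_apply, hb (Sum.inr j) ⟨j, rfl⟩, u]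
  refine ⟨M.toCols₁, ?_⟩
  rw [hM, ← conjTranspose_eq_transpose_of_trivial]
  exact (EuclideanSpace.basisFun m ℝ).toMatrix_orthonormalBasis_conjTranspose_mul_self b

theorem exists_transpose_mul_eq_fromBlocks_diagonal {k' : Type*} [Fintype k']
    {N : Matrix m (k' ⊕ l) ℝ} {σ : l → ℝ} (hσ : ∀ i, 0 < σ i)
    (hN : Nᵀ * N = fromBlocks 0 0 0 (diagonal σ * diagonal σ))
    (hcard : Fintype.card m = Fintype.card k + Fintype.card l) :
    ∃ P : Matrix m (k ⊕ l) ℝ, Pᵀ * P = 1 ∧ Pᵀ * N = fromBlocks 0 0 0 (diagonal σ) := by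
  rw [← fromCols_toCols N, transpose_fromCols, fromRows_mul_fromCols, fromBlocks_inj] at hN
  obtain ⟨hN₁, -, -, hN₂⟩ := hN
  rw [← conjTranspose_eq_transpose_of_trivial, conjTranspose_mul_self_eq_zero] at hN₁
  obtain ⟨U, hU, hUσ⟩ : ∃ U : Matrix m l ℝ, Uᵀ * U = 1 ∧ U * diagonal σ = N.toCols₂ := by
    have hσσ : diagonal σ⁻¹ * diagonal σ = 1 := by
      rw [diagonal_mul_diagonal, ← diagonal_one]
      exact congrArg diagonal (funext fun i => inv_mul_cancel₀ (hσ i).ne')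
    refine ⟨N.toCols₂ * diagonal σ⁻¹, ?_, by rw [Matrix.mul_assoc, hσσ, Matrix.mul_one]⟩
    rw [transpose_mul, diagonal_transpose, Matrix.mul_assoc, ← Matrix.mul_assoc N.toCols₂ᵀ, hN₂,
      ← Matrix.mul_assoc, ← Matrix.mul_assoc, hσσ, Matrix.one_mul]
    exact mul_eq_one_comm.mp hσσ
  obtain ⟨V, hV⟩ := exists_fromCols_transpose_mul_self_eq_one (k := k) hU hcard
  refine ⟨fromCols V U, hV, ?_⟩
  rw [transpose_fromCols, fromRows_mul_fromCols, ← fromBlocks_one, fromBlocks_inj] at hV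
  rw [← fromCols_toCols N, hN₁, ← hUσ, transpose_fromCols, fromRows_mul_fromCols,
    ← Matrix.mul_assoc, ← Matrix.mul_assoc, hV.2.1, hV.2.2.2]
  simp

end Real

theorem PosSemidef.exists_orthogonal_transpose_mul_mul_eq {n r : ℕ}
    {H : Matrix (Fin n) (Fin n) ℝ} (hH : H.PosSemidef) (hr : H.rank = r) :
    ∃ (R : Matrix (Fin n) (Fin (n - r) ⊕ Fin r) ℝ) (σ : Fin r → ℝ), Rᵀ * R = 1 ∧
      (∀ i, 0 < σ i) ∧ Rᵀ * H * R = fromBlocks 0 0 0 (diagonal σ * diagonal σ) := by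
  set μ := hH.1.eigenvalues
  obtain ⟨e, he₀, he⟩ := Equiv.exists_sum_fin_of_card (fun i => μ i ≠ 0) (k := n - r)
    (by rw [Fintype.card_subtype_compl, ← hH.1.rank_eq_card_non_zero_eigs, hr, Fintype.card_fin])
    (by rw [← hH.1.rank_eq_card_non_zero_eigs, hr])
  set U : Matrix (Fin n) (Fin n) ℝ := (hH.1.eigenvectorUnitary : Matrix (Fin n) (Fin n) ℝ)
  have hUU : Uᵀ * U = 1 := by
    rw [← conjTranspose_eq_transpose_of_trivial]
    exact (mem_unitaryGroup_iff').mp hH.1.eigenvectorUnitary.2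
  have hUHU : Uᵀ * H * U = diagonal μ := by
    have h := hH.1.conjStarAlgAut_star_eigenvectorUnitary
    rw [Unitary.conjStarAlgAut_star_apply] at h
    exact h
  refine ⟨U.submatrix id e, fun j => √(μ (e (Sum.inr j))),
    transpose_mul_self_submatrix_eq_one hUU e,
    fun j => Real.sqrt_pos.mpr ((hH.eigenvalues_nonneg _).lt_of_ne' (he j)), ?_⟩
  rw [submatrix_transpose_mul_mul_submatrix, hUHU, submatrix_diagonal_equiv,
    diagonal_mul_diagonal, ← diagonal_zero, fromBlocks_diagonal]
  congr 1
  funext c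
  rcases c with i | j
  · simpa using he₀ i
  · exact (Real.mul_self_sqrt (hH.eigenvalues_nonneg _)).symm

theorem exists_orthogonal_normalForm_of_transpose_mul_self_eq {m n : ℕ}
    {B C : Matrix (Fin m) (Fin n) ℝ} (h : Bᵀ * B = Cᵀ * C) :
    ∃ (P Q : Matrix (Fin m) (Fin (m - B.rank) ⊕ Fin B.rank) ℝ)
      (R : Matrix (Fin n) (Fin (n - B.rank) ⊕ Fin B.rank) ℝ) (σ : Fin B.rank → ℝ),
      Pᵀ * P = 1 ∧ Qᵀ * Q = 1 ∧ Rᵀ * R = 1 ∧ (∀ i, 0 < σ i) ∧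
      Pᵀ * B * R = fromBlocks 0 0 0 (diagonal σ) ∧ Qᵀ * C * R = fromBlocks 0 0 0 (diagonal σ) := by
  have hB : (Bᵀ * B).PosSemidef := by
    simpa only [conjTranspose_eq_transpose_of_trivial] using posSemidef_conjTranspose_mul_self B
  obtain ⟨R, σ, hR, hσ, hBR⟩ :=
    hB.exists_orthogonal_transpose_mul_mul_eq (rank_transpose_mul_self B)
  have hcard :
      Fintype.card (Fin m) = Fintype.card (Fin (m - B.rank)) + Fintype.card (Fin B.rank) := by
    simp [Nat.sub_add_cancel B.rank_le_height]
  obtain ⟨P, hP, hPB⟩ := exists_transpose_mul_eq_fromBlocks_diagonal (N := B * R) hσ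
    (by rw [transpose_mul, ← hBR]; simp only [Matrix.mul_assoc]) hcard
  obtain ⟨Q, hQ, hQC⟩ := exists_transpose_mul_eq_fromBlocks_diagonal (N := C * R) hσ
    (by rw [transpose_mul, ← hBR, h]; simp only [Matrix.mul_assoc]) hcard
  exact ⟨P, Q, R, σ, hP, hQ, hR, hσ, by rw [Matrix.mul_assoc, hPB], by rw [Matrix.mul_assoc, hQC]⟩

end Matrix

section Shape

variable {m n : Type*} [Fintype m] [Fintype n] [DecidableEq m] [DecidableEq n]

/-- The shape operator `S = [[0, A, B], [Aᵀ, 0, C], [Bᵀ, Cᵀ, 0]]` on `V₊ ⊕ V₋ ⊕ V₀`. -/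
def shapeMatrix (A : Matrix m m ℝ) (B C : Matrix m n ℝ) : Matrix (m ⊕ (m ⊕ n)) (m ⊕ (m ⊕ n)) ℝ :=
  fromBlocks 0 (fromCols A B) (fromCols A B)ᵀ (fromBlocks 0 C Cᵀ 0)

structure ShapeRelations (A : Matrix m m ℝ) (B C : Matrix m n ℝ) : Prop where
  mul_transpose : A * Aᵀ = 1 - (2 : ℝ) • (B * Bᵀ)
  anticomm : B * Cᵀ * Aᵀ + A * C * Bᵀ = 0
  comm : A * C * Cᵀ = B * Bᵀ * A

theorem ShapeRelations.of_pow_three_eq_self {A : Matrix m m ℝ} {B C : Matrix m n ℝ}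
    (hA : A * Aᵀ = 1 - (2 : ℝ) • (B * Bᵀ)) (hS : shapeMatrix A B C ^ 3 = shapeMatrix A B C) :
    ShapeRelations A B C := by
  obtain ⟨h₁, h₂⟩ := fromBlocks_zero_pow_three_eq_self hS
  have hEF : fromCols A B * fromBlocks 0 C Cᵀ 0 = fromCols (B * Cᵀ) (A * C) := by
    simp [fromCols_mul_fromBlocks]
  rw [hEF, transpose_fromCols, fromCols_mul_fromRows] at h₁
  rw [hEF, transpose_fromCols, fromCols_mul_fromRows, fromCols_mul_fromBlocks,
    Matrix.mul_fromCols] at h₂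
  have hcol : (A * Aᵀ + B * Bᵀ) * A + A * C * Cᵀ = A := by
    ext i j
    simpa using congr_fun₂ h₂ i (Sum.inl j)
  refine ⟨hA, by simpa only [Matrix.mul_assoc] using h₁, ?_⟩
  rw [← sub_eq_zero] at hcol ⊢
  rw [← hcol, hA]
  simp only [two_smul, Matrix.add_mul, Matrix.sub_mul, Matrix.one_mul]
  abel

theorem ShapeRelations.conj {m' n' : Type*} [Fintype m'] [Fintype n'] [DecidableEq m']
    {A : Matrix m m ℝ} {B C : Matrix m n ℝ} (h : ShapeRelations A B C)
    {P Q : Matrix m m' ℝ} {R : Matrix n n' ℝ} (hP : Pᵀ * P = 1) (hP' : P * Pᵀ = 1)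
    (hQ : Q * Qᵀ = 1) (hR : R * Rᵀ = 1) :
    ShapeRelations (Pᵀ * A * Q) (Pᵀ * B * R) (Qᵀ * C * R) := by
  constructor <;>
    simp only [transpose_conj, conj_mul_conj_of_mul_transpose_eq_one hP',
      conj_mul_conj_of_mul_transpose_eq_one hQ, conj_mul_conj_of_mul_transpose_eq_one hR]
  · rw [h.mul_transpose, Matrix.mul_sub, Matrix.sub_mul, Matrix.mul_one, hP, Matrix.mul_smul,
      Matrix.smul_mul]
  · rw [← Matrix.add_mul, ← Matrix.mul_add, h.anticomm, Matrix.mul_zero, Matrix.zero_mul]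
  · rw [h.comm]

theorem ShapeRelations.exists_eq_fromBlocks {k k' l : Type*} [Fintype k] [Fintype k'] [Fintype l]
    [DecidableEq k] [DecidableEq l] {A : Matrix (k ⊕ l) (k ⊕ l) ℝ} {σ : l → ℝ}
    (hσ : ∀ i, 0 < σ i)
    (h : ShapeRelations A (fromBlocks (0 : Matrix k k' ℝ) 0 0 (diagonal σ))
      (fromBlocks 0 0 0 (diagonal σ))) :
    ∃ W Δ, A = fromBlocks W 0 0 Δ ∧ W * Wᵀ = 1 ∧ Δᵀ = -Δ ∧
      Δᵀ * Δ = 1 - (2 : ℝ) • (diagonal σ * diagonal σ) ∧ Commute Δ (diagonal σ) := by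
  set D := diagonal σ * diagonal σ
  have hG : fromBlocks (0 : Matrix k k' ℝ) 0 0 (diagonal σ) *
      (fromBlocks (0 : Matrix k k' ℝ) 0 0 (diagonal σ))ᵀ = fromBlocks 0 0 0 D := by
    simp [D, fromBlocks_transpose, fromBlocks_multiply]
  obtain ⟨hmt, hanti, hcomm⟩ := h
  rw [hG] at hmt
  rw [hG, Matrix.mul_assoc A, hG] at hanti
  rw [Matrix.mul_assoc A, hG] at hcomm
  have hD : IsUnit D.det := by
    rw [isUnit_iff_ne_zero, det_mul, det_diagonal]
    exact mul_self_ne_zero.mpr (Finset.prod_ne_zero_iff.mpr fun i _ => (hσ i).ne')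
  obtain ⟨W, Δ, rfl, hΔD⟩ := exists_eq_fromBlocks_of_commute hD hcomm
  rw [fromBlocks_transpose, fromBlocks_multiply] at hmt
  rw [fromBlocks_transpose, fromBlocks_multiply, fromBlocks_multiply, fromBlocks_add] at hanti
  simp only [transpose_zero, Matrix.mul_zero, Matrix.zero_mul, add_zero, zero_add] at hmt hanti
  rw [← fromBlocks_one, fromBlocks_smul, sub_eq_add_neg, fromBlocks_neg, fromBlocks_add] at hmt
  simp only [smul_zero, neg_zero, add_zero, ← sub_eq_add_neg, fromBlocks_inj] at hmt
  rw [← fromBlocks_zero, fromBlocks_inj, hΔD.eq, ← Matrix.mul_add] at hanti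
  have hskew : Δᵀ = -Δ := by
    rw [← add_eq_zero_iff_eq_neg, ← nonsing_inv_mul_cancel_left D (Δᵀ + Δ) hD, hanti.2.2.2,
      Matrix.mul_zero]
  refine ⟨W, Δ, rfl, hmt.1, hskew, ?_, ?_⟩
  · rw [hskew, Matrix.neg_mul, ← Matrix.mul_neg, ← hskew, hmt.2.2.2]
  · exact commute_diagonal_of_commute_diagonal_mul_self (fun i => (hσ i).le) hΔD

end Shape

theorem ShapeRelations.exists_normalForm {m n : ℕ} {A : Matrix (Fin m) (Fin m) ℝ}
    {B C : Matrix (Fin m) (Fin n) ℝ} (h : ShapeRelations A B C) (hBC : Bᵀ * B = Cᵀ * C) :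
    ∃ (P Q : Matrix (Fin m) (Fin (m - B.rank) ⊕ Fin B.rank) ℝ)
      (R : Matrix (Fin n) (Fin (n - B.rank) ⊕ Fin B.rank) ℝ) (σ : Fin B.rank → ℝ)
      (Δ : Matrix (Fin B.rank) (Fin B.rank) ℝ),
      Pᵀ * P = 1 ∧ Qᵀ * Q = 1 ∧ Rᵀ * R = 1 ∧ (∀ i, 0 < σ i) ∧ Δᵀ = -Δ ∧
      Δᵀ * Δ = 1 - (2 : ℝ) • (diagonal σ * diagonal σ) ∧ Commute Δ (diagonal σ) ∧
      Pᵀ * B * R = fromBlocks 0 0 0 (diagonal σ) ∧ Qᵀ * C * R = fromBlocks 0 0 0 (diagonal σ) ∧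
      Pᵀ * A * Q = fromBlocks 1 0 0 Δ := by
  obtain ⟨P, Q, R, σ, hP, hQ, hR, hσ, hPB, hQC⟩ :=
    exists_orthogonal_normalForm_of_transpose_mul_self_eq hBC
  have e₂ := finSumFinEquiv.trans (finCongr (Nat.sub_add_cancel B.rank_le_height))
  have e₁ := finSumFinEquiv.trans (finCongr (Nat.sub_add_cancel B.rank_le_width))
  have hconj := h.conj hP ((mul_eq_one_comm_of_equiv e₂).mp hP)
    ((mul_eq_one_comm_of_equiv e₂).mp hQ) ((mul_eq_one_comm_of_equiv e₁).mp hR)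
  rw [hPB, hQC] at hconj
  obtain ⟨W, Δ, hA, hW, hΔ, hΔΔ, hΔσ⟩ := hconj.exists_eq_fromBlocks hσ
  let K : Matrix (Fin (m - B.rank) ⊕ Fin B.rank) (Fin (m - B.rank) ⊕ Fin B.rank) ℝ :=
    fromBlocks Wᵀ 0 0 1
  refine ⟨P, Q * K, R, σ, Δ, hP, ?_, hR, hσ, hΔ, hΔΔ, hΔσ, hPB, ?_, ?_⟩
  · rw [transpose_mul, Matrix.mul_assoc, ← Matrix.mul_assoc Qᵀ, hQ, Matrix.one_mul,
      fromBlocks_transpose, fromBlocks_multiply]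
    simp [hW, fromBlocks_one]
  · rw [transpose_mul, Matrix.mul_assoc, Matrix.mul_assoc, ← Matrix.mul_assoc Qᵀ, hQC,
      fromBlocks_transpose, fromBlocks_multiply]
    simp
  · rw [← Matrix.mul_assoc, hA, fromBlocks_multiply]
    simp [hW]

theorem stmt15 (m1 m2 : ℕ)
    (A : Matrix (Fin m2) (Fin m2) ℝ)
    (B C : Matrix (Fin m2) (Fin m1) ℝ)
    (h1 : Bᵀ * B = Cᵀ * C)
    (h2 : A * Aᵀ = 1 - (2 : ℝ) • (B * Bᵀ))
    (S : Matrix (Fin m2 ⊕ (Fin m2 ⊕ Fin m1)) (Fin m2 ⊕ (Fin m2 ⊕ Fin m1)) ℝ)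
    (hS : S = Matrix.of fun i j =>
      match i, j with
      | Sum.inl i, Sum.inl _ => (0 : ℝ)
      | Sum.inl i, Sum.inr (Sum.inl j) => A i j
      | Sum.inl i, Sum.inr (Sum.inr j) => B i j
      | Sum.inr (Sum.inl i), Sum.inl j => Aᵀ i j
      | Sum.inr (Sum.inl i), Sum.inr (Sum.inl j) => (0 : ℝ)
      | Sum.inr (Sum.inl i), Sum.inr (Sum.inr j) => C i j
      | Sum.inr (Sum.inr i), Sum.inl j => Bᵀ i j
      | Sum.inr (Sum.inr i), Sum.inr (Sum.inl j) => Cᵀ i j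
      | Sum.inr (Sum.inr i), Sum.inr (Sum.inr j) => (0 : ℝ))
    (hS3 : S ^ 3 = S) :
    ∃ (r : ℕ) (_ : r = B.rank) (hr2 : r ≤ m2) (hr1 : r ≤ m1)
      (P Q : Matrix (Fin m2) (Fin m2) ℝ) (R : Matrix (Fin m1) (Fin m1) ℝ)
      (σ : Fin r → ℝ) (Δ : Matrix (Fin r) (Fin r) ℝ),
      Pᵀ * P = 1 ∧ Qᵀ * Q = 1 ∧ Rᵀ * R = 1 ∧
      (∀ i, 0 < σ i) ∧
      Δᵀ = -Δ ∧
      Δᵀ * Δ = 1 - (2 : ℝ) • (Matrix.diagonal σ * Matrix.diagonal σ) ∧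
      Δ * Matrix.diagonal σ = Matrix.diagonal σ * Δ ∧
      Pᵀ * B * R =
        (Matrix.reindex (finSumFinEquiv.trans (finCongr (Nat.sub_add_cancel hr2)))
          (finSumFinEquiv.trans (finCongr (Nat.sub_add_cancel hr1)))
          (Matrix.fromBlocks (0 : Matrix (Fin (m2 - r)) (Fin (m1 - r)) ℝ) 0 0
            (Matrix.diagonal σ))) ∧
      Qᵀ * C * R =
        (Matrix.reindex (finSumFinEquiv.trans (finCongr (Nat.sub_add_cancel hr2)))
          (finSumFinEquiv.trans (finCongr (Nat.sub_add_cancel hr1)))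
          (Matrix.fromBlocks (0 : Matrix (Fin (m2 - r)) (Fin (m1 - r)) ℝ) 0 0
            (Matrix.diagonal σ))) ∧
      Pᵀ * A * Q =
        (Matrix.reindex (finSumFinEquiv.trans (finCongr (Nat.sub_add_cancel hr2)))
          (finSumFinEquiv.trans (finCongr (Nat.sub_add_cancel hr2)))
          (Matrix.fromBlocks (1 : Matrix (Fin (m2 - r)) (Fin (m2 - r)) ℝ) 0 0 Δ)) := by
  have hS' : S = shapeMatrix A B C := by
    subst hS
    ext (i | i | i) (j | j | j) <;> rfl
  obtain ⟨P, Q, R, σ, Δ, hP, hQ, hR, hσ, hΔ, hΔΔ, hΔσ, hPB, hQC, hPAQ⟩ :=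
    (ShapeRelations.of_pow_three_eq_self h2 (hS' ▸ hS3)).exists_normalForm h1
  let e₂ : Fin (m2 - B.rank) ⊕ Fin B.rank ≃ Fin m2 :=
    finSumFinEquiv.trans (finCongr (Nat.sub_add_cancel B.rank_le_height))
  let e₁ : Fin (m1 - B.rank) ⊕ Fin B.rank ≃ Fin m1 :=
    finSumFinEquiv.trans (finCongr (Nat.sub_add_cancel B.rank_le_width))
  refine ⟨B.rank, rfl, B.rank_le_height, B.rank_le_width, P.submatrix id e₂.symm,
    Q.submatrix id e₂.symm, R.submatrix id e₁.symm, σ, Δ,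
    transpose_mul_self_submatrix_eq_one hP _, transpose_mul_self_submatrix_eq_one hQ _,
    transpose_mul_self_submatrix_eq_one hR _, hσ, hΔ, hΔΔ, hΔσ, ?_, ?_, ?_⟩
  · rw [submatrix_transpose_mul_mul_submatrix, hPB]; rfl
  · rw [submatrix_transpose_mul_mul_submatrix, hQC]; rfl
  · rw [submatrix_transpose_mul_mul_submatrix, hPAQ]; rfl
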